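/- Let C be an additive right polycyclic code induced by a binary vector a, and let b be a nonzero binary polynomial of degree less than n lying in C (under the identification with R_n) that has minimal degree among all nonzero binary polynomials in C. Then b divides x^n − a(x) in F2[x]. -/

import Mathlib

open Polynomial

noncomputable section

abbrev F4 : Type := GaloisField 2 2

def IsBin (z : F4) : Prop := z = 0 ∨ z = 1

def IsBinVec {n : ℕ} (a : Fin n → F4) : Prop := ∀ i, IsBin (a i)

def IsBinPoly (p : Polynomial F4) : Prop := ∀ i, IsBin (p.coeff i)

def polyOfVec {n : ℕ} (c : Fin n → F4) : Polynomial F4 :=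
  ∑ i : Fin n, Polynomial.C (c i) * X ^ (i : ℕ)

def rightShift {n : ℕ} (a c : Fin n → F4) : Fin n → F4 := fun i =>
  (if (i : ℕ) = 0 then 0 else c ⟨(i : ℕ) - 1, lt_of_le_of_lt (Nat.sub_le _ _) i.isLt⟩)
    + c ⟨n - 1, Nat.sub_lt i.pos Nat.one_pos⟩ * a i

def leftShift {n : ℕ} (a c : Fin n → F4) : Fin n → F4 := fun i =>
  (if h : (i : ℕ) + 1 < n then c ⟨(i : ℕ) + 1, h⟩ else 0) + c ⟨0, i.pos⟩ * a i

def seqShift {n : ℕ} (a c : Fin n → F4) : Fin n → F4 := fun i =>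
  if h : (i : ℕ) + 1 < n then c ⟨(i : ℕ) + 1, h⟩ else ∑ j, a j * c j

def IsRightPolycyclic {n : ℕ} (a : Fin n → F4) (C : AddSubgroup (Fin n → F4)) : Prop :=
  ∀ c ∈ C, rightShift a c ∈ C

def IsLeftPolycyclic {n : ℕ} (a : Fin n → F4) (C : AddSubgroup (Fin n → F4)) : Prop :=
  ∀ c ∈ C, leftShift a c ∈ C

def quotMk {n : ℕ} (a : Fin n → F4) :
    Polynomial F4 →+* Polynomial F4 ⧸ Ideal.span {X ^ n - polyOfVec a} :=
  Ideal.Quotient.mk _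

def codeImage {n : ℕ} (a : Fin n → F4) (C : AddSubgroup (Fin n → F4)) :
    Set (Polynomial F4 ⧸ Ideal.span {X ^ n - polyOfVec a}) :=
  (fun c => quotMk a (polyOfVec c)) '' (C : Set (Fin n → F4))

/-! Division by `b` in `F2[x]` leaves a binary remainder `r` of degree `< deg b`, and
`r ≡ -q b` modulo `x^n - a(x)`. The right polycyclic shift `c ↦ (0, c_0, …, c_{n-2}) + c_{n-1} a`
is multiplication by `x` in `R_n`, so the image of `C` in `R_n` is stable under multiplication
by binary polynomials and `r` lies in it; minimality of `deg b` forces `r = 0`. -/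

local notation "ι" => algebraMap (ZMod 2) F4

lemma isBin_iff_mem_range (z : F4) : IsBin z ↔ z ∈ RingHom.range ι := by
  constructor
  · rintro (rfl | rfl)
    exacts [⟨0, map_zero _⟩, ⟨1, map_one _⟩]
  · rintro ⟨y, rfl⟩
    rcases (by decide : ∀ y : ZMod 2, y = 0 ∨ y = 1) y with rfl | rfl
    exacts [Or.inl (map_zero _), Or.inr (map_one _)]

lemma isBinPoly_iff_exists_map (p : F4[X]) : IsBinPoly p ↔ ∃ q : (ZMod 2)[X], q.map ι = p := by
  constructor
  · intro h
    exact (mem_map_range ι).2 fun k => (isBin_iff_mem_range _).1 (h k)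
  · rintro ⟨q, rfl⟩ k
    exact (isBin_iff_mem_range _).2 ⟨q.coeff k, (coeff_map _ _).symm⟩

lemma coeff_polyOfVec {n : ℕ} (c : Fin n → F4) (k : ℕ) :
    (polyOfVec c).coeff k = if h : k < n then c ⟨k, h⟩ else 0 := by
  rw [polyOfVec, finsetSum_coeff]
  simp only [coeff_C_mul, coeff_X_pow, mul_ite, mul_one, mul_zero]
  split_ifs with h
  · rw [Finset.sum_eq_single (⟨k, h⟩ : Fin n)]
    · simp
    · intro i _ hi
      rw [if_neg]
      rintro rfl
      exact hi rfl
    · simp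
  · exact Finset.sum_eq_zero fun i _ => if_neg (by omega)

lemma isBinPoly_X_pow_sub_polyOfVec {n : ℕ} {a : Fin n → F4} (ha : IsBinVec a) :
    IsBinPoly (X ^ n - polyOfVec a) := by
  intro k
  rw [isBin_iff_mem_range, coeff_sub, coeff_X_pow, coeff_polyOfVec]
  refine sub_mem ?_ ?_
  · split_ifs
    exacts [one_mem _, zero_mem _]
  · split_ifs
    exacts [(isBin_iff_mem_range _).1 (ha _), zero_mem _]

lemma polyOfVec_rightShift {n : ℕ} (hn : 0 < n) (a c : Fin n → F4) :
    polyOfVec (rightShift a c) =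
      X * polyOfVec c - C (c ⟨n - 1, Nat.sub_lt hn Nat.one_pos⟩) * (X ^ n - polyOfVec a) := by
  ext k
  rw [coeff_sub, coeff_C_mul, coeff_sub, coeff_X_pow]
  rcases k with _ | k
  · rw [mul_coeff_zero, coeff_X_zero, zero_mul, coeff_polyOfVec, coeff_polyOfVec, dif_pos hn,
      dif_pos hn, rightShift]
    simp only [reduceIte, if_neg hn.ne, zero_add]
    ring
  · rw [coeff_X_mul, coeff_polyOfVec, coeff_polyOfVec, coeff_polyOfVec]
    by_cases hk : k + 1 < n
    · simp only [hk, dif_pos, (by omega : k < n), if_neg (by omega : k + 1 ≠ n), rightShift,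
        if_neg k.succ_ne_zero, Nat.add_sub_cancel]
      ring
    · obtain rfl | hkn := eq_or_ne n (k + 1)
      · simp
      · rw [dif_neg hk, if_neg hkn.symm, dif_neg (by omega), dif_neg hk]
        ring

section CodeImage

variable {n : ℕ} (a : Fin n → F4)

def codeHom : (Fin n → F4) →+ F4[X] ⧸ Ideal.span {X ^ n - polyOfVec a} :=
  AddMonoidHom.mk' (fun c => quotMk a (polyOfVec c)) fun c c' => by
    rw [← map_add]
    simp only [polyOfVec, Pi.add_apply, map_add, add_mul, Finset.sum_add_distrib]

lemma codeImage_eq_map (C : AddSubgroup (Fin n → F4)) :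
    codeImage a C = C.map (codeHom a) := rfl

lemma quotMk_X_pow_sub_polyOfVec : quotMk a (X ^ n - polyOfVec a) = 0 :=
  Ideal.Quotient.eq_zero_iff_mem.2 (Ideal.subset_span rfl)

variable {a} (hn : 0 < n) {C : AddSubgroup (Fin n → F4)} (hC : IsRightPolycyclic a C)
include hn hC

lemma X_mul_mem_codeImage {y} (hy : y ∈ codeImage a C) : quotMk a X * y ∈ codeImage a C := by
  obtain ⟨c, hc, rfl⟩ := hy
  refine ⟨rightShift a c, hC c hc, ?_⟩
  change quotMk a (polyOfVec _) = quotMk a X * quotMk a (polyOfVec c)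
  rw [polyOfVec_rightShift hn, map_sub, map_mul (quotMk a) (Polynomial.C _),
    quotMk_X_pow_sub_polyOfVec, mul_zero, sub_zero, map_mul]

lemma X_pow_mul_mem_codeImage (k : ℕ) {y} (hy : y ∈ codeImage a C) :
    quotMk a (X ^ k) * y ∈ codeImage a C := by
  induction k with
  | zero => simpa using hy
  | succ k ih => simpa [pow_succ', mul_assoc] using X_mul_mem_codeImage hn hC ih

lemma map_mul_mem_codeImage (q : (ZMod 2)[X]) {y} (hy : y ∈ codeImage a C) :
    quotMk a (q.map ι) * y ∈ codeImage a C := by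
  induction q using Polynomial.induction_on' with
  | add p q hp hq =>
    rw [codeImage_eq_map] at hp hq ⊢
    rw [Polynomial.map_add, map_add, add_mul]
    exact add_mem hp hq
  | monomial k c =>
    rcases (by decide : ∀ c : ZMod 2, c = 0 ∨ c = 1) c with rfl | rfl
    · rw [monomial_zero_right, Polynomial.map_zero, map_zero, zero_mul]
      exact ⟨0, zero_mem C, (codeHom a).map_zero⟩
    · rw [Polynomial.map_monomial, map_one, ← C_mul_X_pow_eq_monomial, C_1, one_mul]
      exact X_pow_mul_mem_codeImage hn hC k hy

lemma mod_mem_codeImage {f b : (ZMod 2)[X]} (hf : f.map ι = X ^ n - polyOfVec a)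
    (hb : quotMk a (b.map ι) ∈ codeImage a C) : quotMk a ((f % b).map ι) ∈ codeImage a C := by
  have hmod : quotMk a ((f % b).map ι) = -(quotMk a ((f / b).map ι) * quotMk a (b.map ι)) := by
    rw [EuclideanDomain.mod_eq_sub_mul_div, Polynomial.map_sub, Polynomial.map_mul, hf, map_sub,
      quotMk_X_pow_sub_polyOfVec, map_mul, zero_sub, mul_comm]
  rw [hmod, codeImage_eq_map]
  exact neg_mem (map_mul_mem_codeImage hn hC _ hb)

end CodeImage

/-- if `b` is a nonzero binary polynomial of degree less than `n`
lying in the additive right polycyclic code `C` (induced by the binary vector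
`a`) of minimal degree among all nonzero binary polynomials in `C`, then `b`
divides `x^n - a(x)` in `F2[x]` (i.e. with a binary quotient). -/
theorem stmt_7 (n : ℕ) (hn : 0 < n) (a : Fin n → F4) (ha : IsBinVec a)
    (C : AddSubgroup (Fin n → F4)) (hC : IsRightPolycyclic a C)
    (b : Polynomial F4) (hbbin : IsBinPoly b) (hb0 : b ≠ 0)
    (hbdeg : b.degree < (n : WithBot ℕ)) (hbmem : quotMk a b ∈ codeImage a C)
    (hbmin : ∀ p : Polynomial F4, IsBinPoly p → p ≠ 0 → p.degree < (n : WithBot ℕ) →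
      quotMk a p ∈ codeImage a C → b.degree ≤ p.degree) :
    ∃ q : Polynomial F4, IsBinPoly q ∧ X ^ n - polyOfVec a = b * q := by
  obtain ⟨f, hf⟩ := (isBinPoly_iff_exists_map _).1 (isBinPoly_X_pow_sub_polyOfVec ha)
  obtain ⟨b, rfl⟩ := (isBinPoly_iff_exists_map b).1 hbbin
  rw [Ne, Polynomial.map_eq_zero] at hb0
  have hdvd : b ∣ f := by
    by_contra hndvd
    have hlt : (f % b).degree < b.degree := degree_mod_lt f hb0
    rw [← degree_map (f % b) ι, ← degree_map b ι] at hlt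
    exact hlt.not_ge <| hbmin _ ((isBinPoly_iff_exists_map _).2 ⟨_, rfl⟩)
      (map_ne_zero (mt EuclideanDomain.mod_eq_zero.1 hndvd)) (hlt.trans hbdeg)
      (mod_mem_codeImage hn hC hf hbmem)
  obtain ⟨q, rfl⟩ := hdvd
  exact ⟨q.map ι, (isBinPoly_iff_exists_map _).2 ⟨q, rfl⟩, by rw [← hf, Polynomial.map_mul]⟩
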